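/- arXiv:2302.08448 — 3 statements merged into one kernel-verified Lean document; each statement's English description precedes it below -/
import Mathlib

section
/- Let α > 2β > 0, ρ = (α+√(α²−4β²))/(2β), and for k ≥ 1 define d_k = b_{k+1}/b_k where b_k = (1/√(α²−4β²))·[(βρ)^{k+1} − (β/ρ)^{k+1}]. Then |√(βρ) − √(d_k)| < √β · ρ^{−k−1/2}. -/
/-!
With `p = βρ` and `q = β/ρ` we have `0 < q < p`, and `d_k` is the ratio
`(p^(k+2) - q^(k+2)) / (p^(k+1) - q^(k+1))`, which exceeds `p` by
`q^(k+1) (p - q) / (p^(k+1) - q^(k+1)) ≤ q^(k+1) / p^k = β ρ^(-2k-1)`.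
Since `√d - √p < ε` as soon as `d - p ≤ 2 √p ε`, it suffices that
`β ρ^(-2k-1) ≤ 2 √(βρ) · √β ρ^(-k-1/2) = 2 β ρ^(-k)`, which holds because `ρ > 1`.
-/

open Real

section PowSubPow

variable {p q : ℝ}

theorem pow_mul_sub_le_pow_succ_sub_pow_succ (hq : 0 ≤ q) (hqp : q ≤ p) (k : ℕ) :
    p ^ k * (p - q) ≤ p ^ (k + 1) - q ^ (k + 1) := by
  have hpow : q ^ k ≤ p ^ k := pow_le_pow_left₀ hq hqp k
  have hgap : p ^ (k + 1) - q ^ (k + 1) - p ^ k * (p - q) = q * (p ^ k - q ^ k) := by ring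
  nlinarith

theorem pow_add_two_sub_div_sub_self {k : ℕ} (h : p ^ (k + 1) - q ^ (k + 1) ≠ 0) :
    (p ^ (k + 2) - q ^ (k + 2)) / (p ^ (k + 1) - q ^ (k + 1)) - p =
      q ^ (k + 1) * (p - q) / (p ^ (k + 1) - q ^ (k + 1)) := by
  field_simp
  ring

variable (hq : 0 ≤ q) (hqp : q < p) (k : ℕ)
include hq hqp

theorem pow_succ_sub_pow_succ_pos : 0 < p ^ (k + 1) - q ^ (k + 1) :=
  sub_pos.mpr (pow_lt_pow_left₀ hqp hq k.succ_ne_zero)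

theorem le_pow_add_two_sub_div :
    p ≤ (p ^ (k + 2) - q ^ (k + 2)) / (p ^ (k + 1) - q ^ (k + 1)) := by
  have hpos := pow_succ_sub_pow_succ_pos hq hqp k
  rw [← sub_nonneg, pow_add_two_sub_div_sub_self hpos.ne']
  have : 0 ≤ q ^ (k + 1) * (p - q) := mul_nonneg (pow_nonneg hq _) (sub_nonneg.mpr hqp.le)
  positivity

theorem pow_add_two_sub_div_sub_self_le :
    (p ^ (k + 2) - q ^ (k + 2)) / (p ^ (k + 1) - q ^ (k + 1)) - p ≤ q ^ (k + 1) / p ^ k := by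
  have hpos := pow_succ_sub_pow_succ_pos hq hqp k
  have hp : 0 < p := hq.trans_lt hqp
  rw [pow_add_two_sub_div_sub_self hpos.ne', div_le_div_iff₀ hpos (pow_pos hp k)]
  calc q ^ (k + 1) * (p - q) * p ^ k = q ^ (k + 1) * (p ^ k * (p - q)) := by ring
    _ ≤ q ^ (k + 1) * (p ^ (k + 1) - q ^ (k + 1)) :=
        mul_le_mul_of_nonneg_left (pow_mul_sub_le_pow_succ_sub_pow_succ hq hqp.le k)
          (pow_nonneg hq _)

end PowSubPow

theorem abs_sqrt_sub_sqrt_lt_of_sub_le {x y ε : ℝ} (hx : 0 ≤ x) (hxy : x ≤ y) (hε : 0 < ε)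
    (h : y - x ≤ 2 * √x * ε) : |√x - √y| < ε := by
  rw [abs_sub_comm, abs_of_nonneg (sub_nonneg.mpr (sqrt_le_sqrt hxy)), sub_lt_iff_lt_add',
    sqrt_lt' (by positivity)]
  nlinarith [sq_sqrt hx]

theorem sqrt_mul_rpow_neg_sub_half {ρ : ℝ} (hρ : 0 < ρ) (k : ℕ) :
    √ρ * ρ ^ (-(k : ℝ) - 1 / 2) = (ρ ^ k)⁻¹ := by
  rw [sqrt_eq_rpow, ← rpow_add hρ, show 1 / 2 + (-(k : ℝ) - 1 / 2) = -k by ring,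
    rpow_neg hρ.le, rpow_natCast]

/-- Convergence of the diagonal entries of the finite reverse Cholesky factor:
`|√(βρ) − √(d_k)| < √β · ρ^{−k−1/2}`. -/
theorem stmt_5 (α β : ℝ) (hβ : 0 < β) (hα : 2 * β < α)
    (ρ : ℝ) (hρ : ρ = (α + Real.sqrt (α ^ 2 - 4 * β ^ 2)) / (2 * β))
    (b : ℕ → ℝ)
    (hb : ∀ k, b k = (1 / Real.sqrt (α ^ 2 - 4 * β ^ 2)) *
      ((β * ρ) ^ (k + 1) - (β / ρ) ^ (k + 1)))
    (d : ℕ → ℝ) (hd : ∀ k, d k = b (k + 1) / b k) :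
    ∀ k : ℕ, 1 ≤ k →
      |Real.sqrt (β * ρ) - Real.sqrt (d k)| < Real.sqrt β * ρ ^ (-(k : ℝ) - 1 / 2) := by
  intro k _
  have hs : 0 < √(α ^ 2 - 4 * β ^ 2) := sqrt_pos.mpr (by nlinarith)
  have hρ1 : 1 < ρ := by rw [hρ, one_lt_div (by positivity)]; linarith
  have hρ0 : 0 < ρ := one_pos.trans hρ1
  have hqp : β / ρ < β * ρ := by rw [div_lt_iff₀ hρ0]; nlinarith [mul_pos (mul_pos hβ hρ0) (sub_pos.mpr hρ1)]
  have hq : 0 ≤ β / ρ := by positivity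
  have hdk : d k = ((β * ρ) ^ (k + 2) - (β / ρ) ^ (k + 2)) /
      ((β * ρ) ^ (k + 1) - (β / ρ) ^ (k + 1)) := by
    rw [hd, hb, hb]
    field_simp
  refine abs_sqrt_sub_sqrt_lt_of_sub_le (by positivity) (hdk ▸ le_pow_add_two_sub_div hq hqp k)
    (by positivity) ?_
  calc d k - β * ρ ≤ (β / ρ) ^ (k + 1) / (β * ρ) ^ k :=
        hdk ▸ pow_add_two_sub_div_sub_self_le hq hqp k
    _ = β * (ρ ^ (2 * k + 1))⁻¹ := by rw [div_pow, mul_pow]; field_simp; ring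
    _ ≤ 2 * (β * (ρ ^ k)⁻¹) := by
        have : (ρ ^ (2 * k + 1))⁻¹ ≤ (ρ ^ k)⁻¹ :=
          inv_anti₀ (by positivity) (pow_le_pow_right₀ hρ1.le (by omega))
        have : 0 ≤ (ρ ^ k)⁻¹ := by positivity
        nlinarith
    _ = 2 * √(β * ρ) * (√β * ρ ^ (-(k : ℝ) - 1 / 2)) := by
        rw [sqrt_mul hβ.le, ← sqrt_mul_rpow_neg_sub_half hρ0 k]
        linear_combination (-2 * √ρ * ρ ^ (-(k : ℝ) - 1 / 2)) * mul_self_sqrt hβ.le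
end

section
/- Let A be a finite symmetric positive-definite M-matrix (Stieltjes matrix), i.e., A_{ii} > 0 and A_{ij} ≤ 0 for i ≠ j. Then in the Cholesky factorization A = RᵀR with R upper triangular having positive diagonal, R is an M-matrix: R_{ii} > 0 and R_{ij} ≤ 0 for i < j. -/
/-!
Since `R` is upper triangular, `A i j = R i i * R i j + ∑_{k < i} R k i * R k j`. Going down the
rows of `R` by strong induction, every term of the sum is a product of two nonpositive entries of
earlier rows, hence nonnegative; so for `i < j` the sign of `A i j ≤ 0` forces `R i i * R i j ≤ 0`,
and `R i i > 0` gives `R i j ≤ 0`.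
-/

open Matrix Finset

namespace Matrix.IsUpperTriangular

variable {ι 𝕜 : Type*} [Fintype ι] [LinearOrder ι] [LocallyFiniteOrderBot ι]

theorem transpose_mul_self_apply [NonUnitalNonAssocSemiring 𝕜] {R : Matrix ι ι 𝕜}
    (hR : R.IsUpperTriangular) (i j : ι) :
    (Rᵀ * R) i j = R i i * R i j + ∑ k ∈ Iio i, R k i * R k j := by
  have hsupp : ∑ k ∈ Iic i, R k i * R k j = ∑ k, R k i * R k j :=
    sum_subset (subset_univ _) fun k _ hk => by
      rw [hR (show i < k by simpa using hk), zero_mul]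
  simp only [mul_apply, transpose_apply]
  rw [← hsupp, ← Iio_insert, sum_insert (by simp)]

theorem apply_nonpos_of_transpose_mul_self_nonpos [Ring 𝕜] [LinearOrder 𝕜] [IsStrictOrderedRing 𝕜]
    {R : Matrix ι ι 𝕜} (hR : R.IsUpperTriangular) (hdiag : ∀ i, 0 < R i i)
    (hRR : ∀ i j, i < j → (Rᵀ * R) i j ≤ 0) {i j : ι} (hij : i < j) : R i j ≤ 0 := by
  induction i using WellFoundedLT.induction generalizing j with
  | ind i ih =>
    have hearlier : 0 ≤ ∑ k ∈ Iio i, R k i * R k j := by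
      refine sum_nonneg fun k hk => ?_
      have hki : k < i := by simpa using hk
      exact mul_nonneg_of_nonpos_of_nonpos (ih k hki hki) (ih k hki (hki.trans hij))
    have hpivot : R i i * R i j ≤ 0 :=
      (le_add_of_nonneg_right hearlier).trans (hR.transpose_mul_self_apply i j ▸ hRR i j hij)
    exact nonpos_of_mul_nonpos_right hpivot (hdiag i)

end Matrix.IsUpperTriangular

theorem stmt_11_general {n : ℕ} (A R : Matrix (Fin n) (Fin n) ℝ)
    (hAoff : ∀ i j, i ≠ j → A i j ≤ 0)
    (hRtri : ∀ i j : Fin n, j < i → R i j = 0)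
    (hRdiag : ∀ i, 0 < R i i)
    (hchol : A = Rᵀ * R) :
    (∀ i, 0 < R i i) ∧ ∀ i j : Fin n, i < j → R i j ≤ 0 := by
  have hR : R.IsUpperTriangular := fun i j hji => hRtri i j hji
  subst hchol
  exact ⟨hRdiag, fun i j hij =>
    hR.apply_nonpos_of_transpose_mul_self_nonpos hRdiag (fun i j h => hAoff i j h.ne) hij⟩

/-- The upper-triangular Cholesky factor (with positive diagonal) of a
symmetric positive-definite M-matrix (Stieltjes matrix) is itself an
M-matrix: positive diagonal and nonpositive strict upper entries. -/
theorem stmt_11 {n : ℕ} (A R : Matrix (Fin n) (Fin n) ℝ)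
    (hApd : A.PosDef) (hAsym : A.IsSymm)
    (hAdiag : ∀ i, 0 < A i i)
    (hAoff : ∀ i j, i ≠ j → A i j ≤ 0)
    (hRtri : ∀ i j : Fin n, j < i → R i j = 0)
    (hRdiag : ∀ i, 0 < R i i)
    (hchol : A = Rᵀ * R) :
    (∀ i, 0 < R i i) ∧ ∀ i j : Fin n, i < j → R i j ≤ 0 :=
  stmt_11_general A R hAoff hRtri hRdiag hchol
end

section
/- Let (p_n) be the orthonormal Legendre polynomials on [−1,1] with respect to Lebesgue measure, and let R be the upper-triangular Cholesky factor of I + X_P², where X_P is the Legendre Jacobi matrix. Then the operator norm of RᵀR equals 2, and hence for every n, |R_{n,n}| + |R_{n,n+2}| ≤ 2. -/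
/-!
In the orthonormal basis `p`, the quadratic form of `M` at `v` is `∫ (∑ vᵢ pᵢ)² (1 + t²)`, which is
at most `2 ∫ (∑ vᵢ pᵢ)² = 2 ‖v‖²` because `1 + t² ≤ 2` on `[-1, 1]`. The normalised monomial
`√((2k+1)/2) tᵏ`, expanded in the `pᵢ`, attains `2 - 2/(2k+3)`, so the supremum is `2`.

Since `M = RᵀR`, the form at `v` is `‖Rv‖² ≥ (Rv)ₙ²`. Taking for `v` the `n`-th row of `R`
restricted to `{n, n+2}` gives `(a² + b²)² ≤ 2 (a² + b²)` for `a = R n n`, `b = R n (n+2)`,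
whence `|a| + |b| ≤ √2 · √(a² + b²) ≤ 2`.
-/

open MeasureTheory Polynomial Finset

section

variable {ι : Type*} {a b : ℝ} (s : Finset ι) {f : ι → ℝ → ℝ} (v : ι → ℝ)

theorem integral_sq_sum_mul_eq (hf : ∀ i ∈ s, Continuous (f i)) {w : ℝ → ℝ}
    (hw : Continuous w) :
    ∫ t in Set.Icc a b, (∑ i ∈ s, v i * f i t) ^ 2 * w t =
      ∑ i ∈ s, ∑ j ∈ s, v i * (∫ t in Set.Icc a b, f i t * f j t * w t) * v j := by
  have hint : ∀ i ∈ s, ∀ j ∈ s,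
      IntegrableOn (fun t => v i * (f i t * f j t * w t) * v j) (Set.Icc a b) :=
    fun i hi j hj => by
      have := hf i hi; have := hf j hj
      exact Continuous.integrableOn_Icc (by fun_prop)
  calc ∫ t in Set.Icc a b, (∑ i ∈ s, v i * f i t) ^ 2 * w t
      = ∫ t in Set.Icc a b, ∑ i ∈ s, ∑ j ∈ s, v i * (f i t * f j t * w t) * v j := by
        congr 1 with t
        rw [sq, sum_mul_sum, sum_mul]
        exact sum_congr rfl fun i _ => by rw [sum_mul]; exact sum_congr rfl fun j _ => by ring
    _ = _ := by
        rw [integral_finsetSum _ fun i hi => integrable_finsetSum _ (hint i hi)]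
        refine sum_congr rfl fun i hi => ?_
        rw [integral_finsetSum _ (hint i hi)]
        simp only [integral_mul_const, integral_const_mul]

theorem integral_sq_sum_eq_of_orthonormal [DecidableEq ι] (hf : ∀ i ∈ s, Continuous (f i))
    (horth : ∀ i ∈ s, ∀ j ∈ s,
      ∫ t in Set.Icc a b, f i t * f j t = if i = j then 1 else 0) :
    ∫ t in Set.Icc a b, (∑ i ∈ s, v i * f i t) ^ 2 = ∑ i ∈ s, v i ^ 2 := by
  have h := integral_sq_sum_mul_eq s v hf continuous_const (w := fun _ => 1) (a := a) (b := b)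
  simp only [mul_one] at h
  rw [h]
  refine sum_congr rfl fun i hi => ?_
  have hdiag : ∀ j ∈ s, v i * (∫ t in Set.Icc a b, f i t * f j t) * v j =
      if i = j then v i * v j else 0 := fun j hj => by
    rw [horth i hi j hj]; split_ifs <;> ring
  rw [sum_congr rfl hdiag, sum_ite_eq, if_pos hi, sq]

theorem integral_sq_mul_one_add_sq_le {g : ℝ → ℝ} (hg : Continuous g) :
    ∫ t in Set.Icc (-1 : ℝ) 1, g t ^ 2 * (1 + t ^ 2) ≤ 2 * ∫ t in Set.Icc (-1 : ℝ) 1, g t ^ 2 := by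
  rw [← integral_const_mul]
  refine setIntegral_mono_on (Continuous.integrableOn_Icc (by fun_prop))
    (Continuous.integrableOn_Icc (by fun_prop)) measurableSet_Icc fun t ht => ?_
  have : t ^ 2 ≤ 1 := by nlinarith [ht.1, ht.2]
  nlinarith [sq_nonneg (g t)]

theorem sum_mul_integral_one_add_sq_le [DecidableEq ι] (hf : ∀ i ∈ s, Continuous (f i))
    (horth : ∀ i ∈ s, ∀ j ∈ s,
      ∫ t in Set.Icc (-1 : ℝ) 1, f i t * f j t = if i = j then 1 else 0) :
    ∑ i ∈ s, ∑ j ∈ s, v i * (∫ t in Set.Icc (-1 : ℝ) 1, f i t * f j t * (1 + t ^ 2)) * v j ≤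
      2 * ∑ i ∈ s, v i ^ 2 := by
  rw [← integral_sq_sum_mul_eq s v hf (by fun_prop),
    ← integral_sq_sum_eq_of_orthonormal s v hf horth]
  exact integral_sq_mul_one_add_sq_le (continuous_finsetSum _ fun i hi => (hf i hi).const_mul _)

end

theorem exists_sum_smul_eq_of_degree_lt {K : Type*} [Field K] {p : ℕ → K[X]}
    (hdeg : ∀ n, (p n).degree = n) {m : ℕ} {q : K[X]} (hq : q.degree < m) :
    ∃ c : Fin m → K, ∑ i, c i • p i = q := by
  let S : Polynomial.Sequence K := ⟨p, hdeg⟩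
  have hspan := S.span_degreeLT (m := m) fun i _ =>
    (leadingCoeff_ne_zero.mpr (S.ne_zero i)).isUnit
  have hmem : q ∈ Submodule.span K (Set.range fun i : Fin m => p i) := by
    rw [Set.range_comp' p Fin.val, Fin.range_val]
    exact hspan ▸ mem_degreeLT.mpr hq
  exact (Submodule.mem_span_range_iff_exists_fun K).mp hmem

theorem integral_Icc_neg_one_one_pow_two_mul (k : ℕ) :
    ∫ t in Set.Icc (-1 : ℝ) 1, t ^ (2 * k) = 2 / (2 * k + 1) := by
  rw [integral_Icc_eq_integral_Ioc, ← intervalIntegral.integral_of_le (by norm_num), integral_pow,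
    show (-1 : ℝ) ^ (2 * k + 1) = -1 by simp [pow_succ, pow_mul]]
  push_cast
  ring

theorem exists_sum_sq_eq_one_and_sum_mul_integral_eq {p : ℕ → ℝ[X]}
    (hdeg : ∀ n, (p n).degree = n)
    (horth : ∀ m n, ∫ t in Set.Icc (-1 : ℝ) 1, (p m).eval t * (p n).eval t =
      if m = n then 1 else 0) (k : ℕ) :
    ∃ v : Fin (k + 1) → ℝ, ∑ i, v i ^ 2 = 1 ∧
      ∑ i : Fin (k + 1), ∑ j : Fin (k + 1),
        v i * (∫ t in Set.Icc (-1 : ℝ) 1, (p i).eval t * (p j).eval t * (1 + t ^ 2)) * v j =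
          2 - 2 / (2 * k + 3) := by
  set c := √((2 * k + 1) / 2)
  have hc : c ^ 2 = (2 * k + 1) / 2 := Real.sq_sqrt (by positivity)
  obtain ⟨v, hv⟩ := exists_sum_smul_eq_of_degree_lt hdeg (m := k + 1) (q := C c * X ^ k)
    ((degree_C_mul_X_pow_le k c).trans_lt (by exact_mod_cast k.lt_succ_self))
  have heval (t : ℝ) : ∑ i, v i * (p i).eval t = c * t ^ k := by
    simpa [eval_finsetSum] using congrArg (eval t) hv
  have hcont : ∀ i ∈ (univ : Finset (Fin (k + 1))), Continuous fun t => (p i).eval t :=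
    fun i _ => (p i).continuous
  have hsq (t : ℝ) : (c * t ^ k) ^ 2 = c ^ 2 * t ^ (2 * k) := by ring
  refine ⟨v, ?_, ?_⟩
  · rw [← integral_sq_sum_eq_of_orthonormal (a := -1) (b := 1) univ v hcont
      (by simp [horth, Fin.val_inj])]
    simp only [heval, hsq, integral_const_mul, integral_Icc_neg_one_one_pow_two_mul, hc]
    field_simp
  · rw [← integral_sq_sum_mul_eq univ v hcont (by fun_prop)]
    have hsplit (t : ℝ) : (c * t ^ k) ^ 2 * (1 + t ^ 2) =
        c ^ 2 * t ^ (2 * k) + c ^ 2 * t ^ (2 * (k + 1)) := by ring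
    simp only [heval, hsplit]
    rw [integral_add (Continuous.integrableOn_Icc (by fun_prop))
      (Continuous.integrableOn_Icc (by fun_prop))]
    simp only [integral_const_mul, integral_Icc_neg_one_one_pow_two_mul, hc]
    push_cast
    field_simp
    ring

section

variable {R M : ℕ → ℕ → ℝ} (hRtri : ∀ k n, n < k → R k n = 0)
  (hchol : ∀ m n, ∑ k ∈ range (min m n + 1), R k m * R k n = M m n)
include hRtri hchol

theorem sum_range_mul_eq_of_cholesky {N m n : ℕ} (h : min m n < N) :
    ∑ k ∈ range N, R k m * R k n = M m n := by
  rw [← hchol, eq_comm]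
  refine sum_subset (range_subset_range.mpr h) fun k _ hk => ?_
  rw [mem_range, not_lt] at hk
  rcases min_choice m n with hmin | hmin <;> rw [hmin] at hk
  · rw [hRtri k m (by omega), zero_mul]
  · rw [hRtri k n (by omega), mul_zero]

theorem sq_sum_mul_le_of_cholesky (s : Finset ℕ) (v : ℕ → ℝ) (n : ℕ) :
    (∑ i ∈ s, R n i * v i) ^ 2 ≤ ∑ i ∈ s, ∑ j ∈ s, v i * M i j * v j := by
  set N := n + s.sup id + 1
  have hM : ∀ i ∈ s, ∀ j ∈ s, M i j = ∑ k ∈ range N, R k i * R k j := fun i hi j _ =>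
    (sum_range_mul_eq_of_cholesky hRtri hchol
      (by have := le_sup (f := id) hi; simp only [id] at this; omega)).symm
  calc (∑ i ∈ s, R n i * v i) ^ 2 ≤ ∑ k ∈ range N, (∑ i ∈ s, R k i * v i) ^ 2 :=
        single_le_sum (f := fun k => (∑ i ∈ s, R k i * v i) ^ 2) (fun _ _ => sq_nonneg _)
          (mem_range.mpr (by omega))
    _ = ∑ i ∈ s, ∑ j ∈ s, v i * M i j * v j := by
        simp only [sq, sum_mul_sum]
        rw [sum_comm]
        refine sum_congr rfl fun i hi => ?_
        rw [sum_comm]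
        refine sum_congr rfl fun j hj => ?_
        rw [hM i hi j hj, mul_sum, sum_mul]
        exact sum_congr rfl fun k _ => by ring

theorem sum_sq_le_of_cholesky {C : ℝ} (hC0 : 0 ≤ C) (s : Finset ℕ)
    (hC : ∀ v : ℕ → ℝ, ∑ i ∈ s, ∑ j ∈ s, v i * M i j * v j ≤ C * ∑ i ∈ s, v i ^ 2) (n : ℕ) :
    ∑ i ∈ s, R n i ^ 2 ≤ C := by
  have h := (sq_sum_mul_le_of_cholesky hRtri hchol s (R n) n).trans (hC (R n))
  simp only [← sq] at h
  nlinarith [sum_nonneg fun i (_ : i ∈ s) => sq_nonneg (R n i)]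

end

theorem stmt_12_general
    (p : ℕ → Polynomial ℝ)
    (hdeg : ∀ n, (p n).natDegree = n) (hlead : ∀ n, 0 < (p n).leadingCoeff)
    (horth : ∀ m n, (∫ t in Set.Icc (-1 : ℝ) 1, (p m).eval t * (p n).eval t) =
      if m = n then (1 : ℝ) else 0)
    (M : ℕ → ℕ → ℝ)
    (hM : ∀ m n, M m n =
      ∫ t in Set.Icc (-1 : ℝ) 1, (p m).eval t * (p n).eval t * (1 + t ^ 2))
    (R : ℕ → ℕ → ℝ)
    (hRtri : ∀ k n, n < k → R k n = 0)
    (hchol : ∀ m n, (∑ k ∈ Finset.range (min m n + 1), R k m * R k n) = M m n) :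
    IsLUB {x : ℝ | ∃ (N : ℕ) (v : Fin N → ℝ), (∑ i, v i ^ 2) = 1 ∧
        x = ∑ i : Fin N, ∑ j : Fin N, v i * M (i : ℕ) (j : ℕ) * v j} 2 ∧
      ∀ n, |R n n| + |R n (n + 2)| ≤ 2 := by
  refine ⟨⟨?_, fun b hb => ?_⟩, fun n => ?_⟩
  · rintro x ⟨N, v, hv, rfl⟩
    simpa [hM, hv] using sum_mul_integral_one_add_sq_le univ v (fun i _ => (p i).continuous)
      (by simp [horth, Fin.val_inj])
  · have hdeg' (n : ℕ) : (p n).degree = n :=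
      degree_eq_iff_natDegree_eq (leadingCoeff_ne_zero.mp (hlead n).ne') |>.mpr (hdeg n)
    have hlim : Filter.Tendsto (fun k : ℕ => 2 - 2 / (2 * (k : ℝ) + 3)) Filter.atTop (nhds 2) := by
      simpa using tendsto_const_nhds.sub (tendsto_const_nhds.div_atTop
        (Filter.tendsto_atTop_add_const_right _ _
          (tendsto_natCast_atTop_atTop.const_mul_atTop (two_pos (α := ℝ)))))
    refine le_of_tendsto' hlim fun k => hb ?_
    obtain ⟨v, hv, hQ⟩ := exists_sum_sq_eq_one_and_sum_mul_integral_eq hdeg' horth k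
    exact ⟨k + 1, v, hv, by simpa [hM] using hQ.symm⟩
  · have hrow := sum_sq_le_of_cholesky hRtri hchol zero_le_two {n, n + 2}
      (fun v => by
        simp only [hM]
        exact sum_mul_integral_one_add_sq_le _ v (fun i _ => (p i).continuous) (by simp [horth])) n
    rw [sum_pair (by omega)] at hrow
    nlinarith [sq_abs (R n n), sq_abs (R n (n + 2)), sq_nonneg (|R n n| - |R n (n + 2)|),
      abs_nonneg (R n n), abs_nonneg (R n (n + 2))]

/-- Let `p` be the orthonormal Legendre polynomials on `[-1,1]` and `R` the
upper-triangular Cholesky factor of `I + X_P²`, i.e. of the matrix `M` of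
multiplication by `1 + t²` (which by parity has only the bands `0` and `2`).
Then the `ℓ²` operator norm of `RᵀR = M`, expressed as the supremum of its
quadratic form over finitely supported unit vectors, equals `2`; hence
`|R_{n,n}| + |R_{n,n+2}| ≤ 2` for every `n`. -/
theorem stmt_12
    (p : ℕ → Polynomial ℝ)
    (hdeg : ∀ n, (p n).natDegree = n) (hlead : ∀ n, 0 < (p n).leadingCoeff)
    (horth : ∀ m n, (∫ t in Set.Icc (-1 : ℝ) 1, (p m).eval t * (p n).eval t) =
      if m = n then (1 : ℝ) else 0)
    (M : ℕ → ℕ → ℝ)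
    (hM : ∀ m n, M m n =
      ∫ t in Set.Icc (-1 : ℝ) 1, (p m).eval t * (p n).eval t * (1 + t ^ 2))
    (R : ℕ → ℕ → ℝ)
    (hRtri : ∀ k n, n < k → R k n = 0)
    (hRband : ∀ k n, R k n ≠ 0 → k = n ∨ k + 2 = n)
    (hRdiag : ∀ n, 0 < R n n)
    (hchol : ∀ m n, (∑ k ∈ Finset.range (min m n + 1), R k m * R k n) = M m n) :
    IsLUB {x : ℝ | ∃ (N : ℕ) (v : Fin N → ℝ), (∑ i, v i ^ 2) = 1 ∧
        x = ∑ i : Fin N, ∑ j : Fin N, v i * M (i : ℕ) (j : ℕ) * v j} 2 ∧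
      ∀ n, |R n n| + |R n (n + 2)| ≤ 2 :=
  stmt_12_general p hdeg hlead horth M hM R hRtri hchol
end
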